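/- arXiv:2510.14581 — 3 statements merged into one kernel-verified Lean document; each statement's English description precedes it below -/
import Mathlib

section
/- Let S_1, …, S_{n_0}, S_{n_0+1} be i.i.d. real-valued random variables and let U be a Uniform[0,1] random variable independent of (S_1, …, S_{n_0+1}). Define the randomized conformal p-value p̂ = (Σ_{i=1}^{n_0} 1{S_i < S_{n_0+1}} + (1 + Σ_{i=1}^{n_0} 1{S_i = S_{n_0+1}})·U)/(n_0+1). Then p̂ is super-uniform: for every t ∈ [0,1], P(p̂ ≤ t) ≤ t. -/
open MeasureTheory ProbabilityTheory

/-- The randomized conformal p-value built from i.i.d. scores `S 0, …, S n₀` (calibration)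
and `S (last n₀)` (test), with an independent `Uniform[0,1]` tie-breaking variable `U`. -/
noncomputable def randConformalPval {Ω : Type*} (n₀ : ℕ)
    (S : Fin (n₀ + 1) → Ω → ℝ) (U : Ω → ℝ) (ω : Ω) : ℝ :=
  (({i : Fin n₀ | S (Fin.castSucc i) ω < S (Fin.last n₀) ω}.ncard : ℝ) +
      (1 + ({i : Fin n₀ | S (Fin.castSucc i) ω = S (Fin.last n₀) ω}.ncard : ℝ)) * U ω) /
    ((n₀ : ℝ) + 1)

/-!
Independence makes the law of `(S, U)` the product `ν^⊗(n₀+1) ⊗ Uniform[0,1]`, which is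
invariant under permutations of the scores; so `P(p̂ ≤ t)` does not depend on which score plays
the test role, and `(n₀+1) P(p̂ ≤ t)` is the expectation over the scores of
`∑ᵢ P_U(rankᵢ ≤ t(n₀+1))`, where `rankᵢ = #{j | sⱼ < sᵢ} + #{j | sⱼ = sᵢ} U`. For fixed scores
the `E` scores tied at a value with `L` scores below it have ranks uniform on `[L, L + E]`, so
together they contribute the length of the part of `[L, L + E]` below `t(n₀+1)`. These intervals
are disjoint for distinct values and lie in `[0, ∞)`, so the sum is at most `t(n₀+1)`.
-/

open Finset in
lemma Fin.card_filter_univ_castSucc {n : ℕ} (p : Fin (n + 1) → Prop) [DecidablePred p] :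
    #{x | p x} = #{i : Fin n | p i.castSucc} + if p (Fin.last n) then 1 else 0 := by
  simp only [Finset.card_filter, Fin.sum_univ_castSucc]

namespace Conformal
open Finset Function

variable {ι α : Type*} [Fintype ι] [LinearOrder α]

def countLT (s : ι → α) (v : α) : ℕ := #{j | s j < v}

def countEQ (s : ι → α) (v : α) : ℕ := #{j | s j = v}

noncomputable def randRank (s : ι → α) (u : ℝ) (i : ι) : ℝ :=
  countLT s (s i) + countEQ s (s i) * u

def rankInterval (s : ι → α) (v : α) : Set ℝ :=
  Set.Ioc (countLT s v) (countLT s v + countEQ s v)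

lemma countEQ_pos (s : ι → α) (i : ι) : 0 < countEQ s (s i) :=
  Finset.card_pos.mpr ⟨i, by simp⟩

lemma countLT_add_countEQ_le (s : ι → α) {v w : α} (h : v < w) :
    countLT s v + countEQ s v ≤ countLT s w := by
  simp only [countLT, countEQ, Finset.card_filter, ← Finset.sum_add_distrib]
  refine Finset.sum_le_sum fun j _ => ?_
  split_ifs <;> first | omega | (exfalso; order)

lemma pairwise_disjoint_rankInterval (s : ι → α) : Pairwise (Disjoint on rankInterval s) := by
  intro v w hvw
  rcases hvw.lt_or_gt with h | h
  · exact Set.Ioc_disjoint_Ioc_of_le (mod_cast countLT_add_countEQ_le s h)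
  · exact (Set.Ioc_disjoint_Ioc_of_le (mod_cast countLT_add_countEQ_le s h)).symm

lemma ofReal_mul_restrict_Icc_setOf_add_mul_le {a b : ℝ} (hb : 0 < b) (T : ℝ) :
    ENNReal.ofReal b * volume.restrict (Set.Icc 0 1) {u | a + b * u ≤ T} =
      volume (Set.Ioc a (a + b) ∩ Set.Iic T) := by
  have hset : {u | a + b * u ≤ T} ∩ Set.Icc 0 1 = Set.Icc 0 (min 1 ((T - a) / b)) := by
    ext u
    simp only [Set.mem_inter_iff, Set.mem_ofPred_eq, Set.mem_Icc, le_min_iff, le_div_iff₀ hb]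
    constructor <;> intro h <;> refine ⟨?_, ?_, ?_⟩ <;> linarith [h.1, h.2.1, h.2.2]
  rw [Measure.restrict_apply' measurableSet_Icc, hset, Set.Ioc_inter_Iic, Real.volume_Icc,
    Real.volume_Ioc, ← ENNReal.ofReal_mul hb.le, sub_zero, mul_min_of_nonneg _ _ hb.le,
    mul_div_cancel₀ _ hb.ne', mul_one, ← min_sub_sub_right, add_sub_cancel_left]

lemma rankInterval_subset_Ioi (s : ι → α) (v : α) : rankInterval s v ⊆ Set.Ioi 0 :=
  fun _ hx => lt_of_le_of_lt (Nat.cast_nonneg _) hx.1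

lemma sum_restrict_Icc_randRank_le (s : ι → α) (T : ℝ) :
    ∑ i, volume.restrict (Set.Icc 0 1) {u | randRank s u i ≤ T} ≤ ENNReal.ofReal T := by
  calc ∑ i, volume.restrict (Set.Icc 0 1) {u | randRank s u i ≤ T}
      = ∑ v ∈ univ.image s, countEQ s v •
          volume.restrict (Set.Icc 0 1) {u | countLT s v + countEQ s v * u ≤ T} :=
        Finset.sum_comp (fun v => volume.restrict (Set.Icc 0 1)
          {u : ℝ | countLT s v + countEQ s v * u ≤ T}) s
    _ = ∑ v ∈ univ.image s, volume (rankInterval s v ∩ Set.Iic T) := by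
        refine Finset.sum_congr rfl fun v hv => ?_
        obtain ⟨i, -, rfl⟩ := Finset.mem_image.mp hv
        rw [nsmul_eq_mul, ← ENNReal.ofReal_natCast, ofReal_mul_restrict_Icc_setOf_add_mul_le
          (mod_cast countEQ_pos s i), rankInterval]
    _ = volume (⋃ v ∈ univ.image s, rankInterval s v ∩ Set.Iic T) :=
        (measure_biUnion_finset
          (fun v _ w _ hvw => (pairwise_disjoint_rankInterval s hvw).mono inf_le_left inf_le_left)
          fun _ _ => measurableSet_Ioc.inter measurableSet_Iic).symm
    _ ≤ volume (Set.Ioc 0 T) :=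
        measure_mono <| Set.iUnion₂_subset fun v _ x hx => ⟨rankInterval_subset_Ioi s v hx.1, hx.2⟩
    _ = ENNReal.ofReal T := by rw [Real.volume_Ioc, sub_zero]

lemma randRank_comp_perm (s : ι → α) (u : ℝ) (σ : Equiv.Perm ι) (i : ι) :
    randRank (s ∘ σ) u i = randRank s u (σ i) := by
  simp only [randRank, countLT, countEQ, Finset.card_filter, comp_apply]
  rw [Equiv.sum_comp σ (fun j => if s j < s (σ i) then 1 else 0),
    Equiv.sum_comp σ (fun j => if s j = s (σ i) then 1 else 0)]

lemma measurable_randRank (i : ι) : Measurable fun x : (ι → ℝ) × ℝ => randRank x.1 x.2 i := by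
  have hcoord (j : ι) : Measurable fun x : (ι → ℝ) × ℝ => x.1 j :=
    (measurable_pi_apply j).comp measurable_fst
  simp only [randRank, countLT, countEQ, Finset.natCast_card_filter]
  refine .add ?_ (.mul ?_ measurable_snd) <;> refine Finset.measurable_sum _ fun j _ => ?_
  · exact Measurable.ite (measurableSet_lt (hcoord j) (hcoord i)) measurable_const measurable_const
  · exact Measurable.ite (measurableSet_eq_fun (hcoord j) (hcoord i)) measurable_const
      measurable_const

variable {ν ρ : Measure ℝ}

lemma measure_randRank_le_eq [DecidableEq ι] [SigmaFinite ν] [SigmaFinite ρ] (T : ℝ) (i j : ι) :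
    (Measure.pi (fun _ : ι => ν)).prod ρ {x | randRank x.1 x.2 i ≤ T} =
      (Measure.pi (fun _ : ι => ν)).prod ρ {x | randRank x.1 x.2 j ≤ T} := by
  have hperm : MeasurePreserving
      (Prod.map (MeasurableEquiv.arrowCongr' (Equiv.swap i j) (MeasurableEquiv.refl ℝ)) id)
      ((Measure.pi (fun _ : ι => ν)).prod ρ) ((Measure.pi (fun _ : ι => ν)).prod ρ) :=
    (measurePreserving_arrowCongr' _ _ _ _ fun _ => MeasurePreserving.id ν).prod
      (MeasurePreserving.id ρ)
  rw [← hperm.measure_preimage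
    (measurableSet_le (measurable_randRank i) measurable_const).nullMeasurableSet]
  have happly (s : ι → ℝ) :
      MeasurableEquiv.arrowCongr' (Equiv.swap i j) (MeasurableEquiv.refl ℝ) s =
        s ∘ Equiv.swap i j :=
    rfl
  congr 1
  ext x
  simp only [Set.mem_preimage, Set.mem_ofPred_eq, Prod.map_fst, Prod.map_snd, id, happly,
    randRank_comp_perm, Equiv.swap_apply_left]

lemma card_mul_measure_randRank_le [IsProbabilityMeasure ν] (T : ℝ) (i : ι) :
    Fintype.card ι * (Measure.pi (fun _ : ι => ν)).prod (volume.restrict (Set.Icc 0 1))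
      {x | randRank x.1 x.2 i ≤ T} ≤ ENNReal.ofReal T := by
  classical
  set π := (Measure.pi (fun _ : ι => ν)).prod (volume.restrict (Set.Icc (0 : ℝ) 1))
  have hmeas (j : ι) : MeasurableSet {x : (ι → ℝ) × ℝ | randRank x.1 x.2 j ≤ T} :=
    measurableSet_le (measurable_randRank j) measurable_const
  calc Fintype.card ι * π {x | randRank x.1 x.2 i ≤ T}
      = ∑ j, π {x | randRank x.1 x.2 j ≤ T} := by
        rw [← nsmul_eq_mul, ← Finset.card_univ, ← Finset.sum_const]
        exact Finset.sum_congr rfl fun j _ => measure_randRank_le_eq T i j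
    _ = ∫⁻ s, ∑ j, volume.restrict (Set.Icc 0 1) (Prod.mk s ⁻¹' {x | randRank x.1 x.2 j ≤ T})
          ∂Measure.pi (fun _ : ι => ν) := by
        rw [lintegral_finsetSum _ fun j _ => measurable_measure_prodMk_left (hmeas j)]
        exact Finset.sum_congr rfl fun j _ => Measure.prod_apply (hmeas j)
    _ ≤ ∫⁻ _, ENNReal.ofReal T ∂Measure.pi (fun _ : ι => ν) :=
        lintegral_mono fun s => sum_restrict_Icc_randRank_le s T
    _ = ENNReal.ofReal T := by rw [lintegral_const, measure_univ, mul_one]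

end Conformal

open Conformal in
lemma randConformalPval_eq_randRank_div {Ω : Type*} (n₀ : ℕ) (S : Fin (n₀ + 1) → Ω → ℝ)
    (U : Ω → ℝ) (ω : Ω) :
    randConformalPval n₀ S U ω = randRank (fun i => S i ω) (U ω) (Fin.last n₀) / (n₀ + 1) := by
  simp only [randConformalPval, randRank, countLT, countEQ, Fin.card_filter_univ_castSucc,
    Set.ncard_eq_toFinset_card', Set.toFinset_ofPred, lt_irrefl, if_false, if_true]
  push_cast
  ring

/-- If `S 1, …, S (n₀+1)` are i.i.d. real random variables and `U` is `Uniform[0,1]`,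
independent of the scores, then the randomized conformal p-value is super-uniform:
`P(p̂ ≤ t) ≤ t` for every `t ∈ [0,1]`. -/
theorem randConformalPval_superuniform
    {Ω : Type*} [MeasurableSpace Ω] (μ : Measure Ω) [IsProbabilityMeasure μ]
    (n₀ : ℕ) (S : Fin (n₀ + 1) → Ω → ℝ) (hSmeas : ∀ i, Measurable (S i))
    (ν : Measure ℝ) [IsProbabilityMeasure ν]
    (hSindep : iIndepFun S μ)
    (hSlaw : ∀ i, Measure.map (S i) μ = ν)
    (U : Ω → ℝ) (hUmeas : Measurable U)
    (hUlaw : Measure.map U μ = volume.restrict (Set.Icc (0 : ℝ) 1))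
    (hindep : IndepFun (fun ω => fun i => S i ω) U μ) :
    ∀ t ∈ Set.Icc (0 : ℝ) 1,
      μ {ω | randConformalPval n₀ S U ω ≤ t} ≤ ENNReal.ofReal t := by
  intro t _
  have hS : Measurable fun ω i => S i ω := measurable_pi_lambda _ hSmeas
  have hlaw : μ.map (fun ω => (fun i => S i ω, U ω)) =
      (Measure.pi fun _ => ν).prod (volume.restrict (Set.Icc 0 1)) := by
    rw [(indepFun_iff_map_prod_eq_prod_map_map hS.aemeasurable hUmeas.aemeasurable).mp hindep,
      (iIndepFun_iff_map_fun_eq_pi_map fun i => (hSmeas i).aemeasurable).mp hSindep, hUlaw]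
    simp only [hSlaw]
  have hevent : {ω | randConformalPval n₀ S U ω ≤ t} = (fun ω => (fun i => S i ω, U ω)) ⁻¹'
      {x | Conformal.randRank x.1 x.2 (Fin.last n₀) ≤ t * (n₀ + 1)} := by
    ext ω
    simp only [Set.mem_ofPred_eq, Set.mem_preimage, randConformalPval_eq_randRank_div,
      div_le_iff₀ (by positivity : (0 : ℝ) < n₀ + 1)]
  have hbound := Conformal.card_mul_measure_randRank_le (ν := ν) (t * (n₀ + 1)) (Fin.last n₀)
  rw [hevent, ← Measure.map_apply (hS.prodMk hUmeas)
    (measurableSet_le (Conformal.measurable_randRank _) measurable_const), hlaw]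
  have hcard : ENNReal.ofReal (n₀ + 1) = Fintype.card (Fin (n₀ + 1)) := by
    rw [Fintype.card_fin, ← ENNReal.ofReal_natCast, Nat.cast_add_one]
  rw [ENNReal.ofReal_mul' (by positivity), hcard, mul_comm] at hbound
  exact (ENNReal.mul_le_mul_iff_left (by simp) (by simp)).mp hbound
end

section
/- Let S_1, …, S_{n_0}, S_{n_0+1} be i.i.d. real-valued random variables and let U be a Uniform[0,1] random variable independent of (S_1, …, S_{n_0+1}). Define the randomized conformal p-value p̂ = (Σ_{i=1}^{n_0} 1{S_i < S_{n_0+1}} + (1 + Σ_{i=1}^{n_0} 1{S_i = S_{n_0+1}})·U)/(n_0+1). Then p̂ is exactly uniformly distributed on [0,1]: for every t ∈ [0,1], P(p̂ ≤ t) = t. -/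
open MeasureTheory ProbabilityTheory

/-! With `N = n₀ + 1`, `N p̂ = L + c U`, where `L` counts the scores below the test score and `c`
its ties, itself included; given the scores it is uniform on `[L, L + c]`. The scores are
exchangeable, so the test index may be replaced by any index `k` without changing
`P(N p̂ ≤ T)`, `T = N t`. Summed over `k`, the `c` members of a block of ties together contribute
the length of `[L, L + c] ∩ (-∞, T]`; these intervals tile `[0, N]`, so the sum is `T` and the
probability is `T / N = t`. -/

open Finset
open scoped ENNReal

section Combinatorics
variable {ι : Type*} [Fintype ι]

theorem sum_div_card_fiber {β K : Type*} [DecidableEq β] [Semifield K] [CharZero K]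
    (s : ι → β) (f : β → K) :
    ∑ k, f (s k) / #{j | s j = s k} = ∑ v ∈ univ.image s, f v := by
  rw [sum_comp (fun v => f v / #{j | s j = v}) s]
  refine sum_congr rfl fun v hv => ?_
  obtain ⟨k, -, rfl⟩ := mem_image.mp hv
  have hk : (#{j | s j = s k} : K) ≠ 0 :=
    Nat.cast_ne_zero.mpr (card_ne_zero_of_mem (a := k) (by simp))
  rw [nsmul_eq_mul]
  exact mul_div_cancel₀ _ hk

variable {α G : Type*} [LinearOrder α] [AddCommGroup G]

theorem sum_sub_card_filter_lt_of_lowerClosed (s : ι → α) (h : ℕ → G) (V : Finset α)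
    (hV : ∀ j, ∀ v ∈ V, s j ≤ v → s j ∈ V) :
    ∑ v ∈ V, (h #{j | s j ≤ v} - h #{j | s j < v}) = h #{j | s j ∈ V} - h 0 := by
  induction V using Finset.induction_on_max with
  | empty => simp
  | insert a V haV ih =>
    have hle : ∀ j, s j ≤ a ↔ s j ∈ insert a V := fun j =>
      ⟨hV j a (mem_insert_self a V), fun hj => (mem_insert.mp hj).elim le_of_eq (haV _ · |>.le)⟩
    have hlt : ∀ j, s j < a ↔ s j ∈ V := fun j =>
      ⟨fun hj => ((mem_insert.mp ((hle j).mp hj.le)).resolve_left hj.ne), haV _⟩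
    have hV' : ∀ j, ∀ v ∈ V, s j ≤ v → s j ∈ V := fun j v hv hjv =>
      (hlt j).mp (hjv.trans_lt (haV v hv))
    rw [sum_insert fun h => (haV a h).false, ih hV']
    simp only [hle, hlt]
    abel

theorem sum_image_sub_card_filter_lt (s : ι → α) (h : ℕ → G) :
    ∑ v ∈ univ.image s, (h #{j | s j ≤ v} - h #{j | s j < v}) = h (Fintype.card ι) - h 0 := by
  rw [sum_sub_card_filter_lt_of_lowerClosed s h _ fun j _ _ _ => mem_image_of_mem s (mem_univ j)]
  simp

end Combinatorics

theorem volume_Icc_inter_setOf_add_mul_le {b m : ℝ} (hm : 0 < m) (T : ℝ) :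
    volume.restrict (Set.Icc 0 1) {u | b + m * u ≤ T} =
      ENNReal.ofReal ((min T (b + m) - min T b) / m) := by
  have hset : {u | b + m * u ≤ T} ∩ Set.Icc 0 1 = Set.Icc 0 (min ((T - b) / m) 1) := by
    ext u
    simp only [Set.mem_inter_iff, Set.mem_ofPred_eq, Set.mem_Icc, le_min_iff, le_div_iff₀ hm]
    exact ⟨fun ⟨h₁, h₂, h₃⟩ => ⟨h₂, by linarith, h₃⟩, fun ⟨h₁, h₂, h₃⟩ => ⟨by linarith, h₁, h₃⟩⟩
  rw [Measure.restrict_apply' measurableSet_Icc, hset, Real.volume_Icc, sub_zero]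
  rcases le_total T b with hTb | hbT
  · rw [ENNReal.ofReal_of_nonpos, ENNReal.ofReal_of_nonpos]
    · rw [min_eq_left hTb, min_eq_left (by linarith), sub_self, zero_div]
    · exact (min_le_left _ _).trans (div_nonpos_of_nonpos_of_nonneg (by linarith) hm.le)
  · rw [min_eq_right hbT, ← min_sub_sub_right, add_sub_cancel_left, ← min_div_div_right hm.le,
      div_self hm.ne']

section RandRank
variable {ι : Type*} [Fintype ι]

-- The tie count includes `k` itself: this is the `1 +` in `randConformalPval`.
noncomputable def randRank (s : ι → ℝ) (k : ι) (u : ℝ) : ℝ :=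
  #{j | s j < s k} + #{j | s j = s k} * u

theorem randRank_comp_perm (σ : Equiv.Perm ι) (s : ι → ℝ) (k : ι) (u : ℝ) :
    randRank (s ∘ σ) k u = randRank s (σ k) u := by
  have hcard (p : ℝ → Prop) [DecidablePred p] : #{j | p (s (σ j))} = #{j | p (s j)} :=
    card_equiv σ fun j => by simp
  simp only [randRank, Function.comp_apply]
  rw [hcard (· < s (σ k)), hcard (· = s (σ k))]

theorem measurable_card_filter {α : Type*} [MeasurableSpace α] (p : ι → α → Prop)
    [∀ j a, Decidable (p j a)] (hp : ∀ j, MeasurableSet {a | p j a}) :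
    Measurable fun a => (#{j | p j a} : ℝ) := by
  simp only [card_filter, Nat.cast_sum, Nat.cast_ite, Nat.cast_one, Nat.cast_zero]
  exact Finset.measurable_sum _ fun j _ => Measurable.ite (hp j) measurable_const measurable_const

theorem measurable_randRank (k : ι) :
    Measurable fun p : (ι → ℝ) × ℝ => randRank p.1 k p.2 := by
  have hlt := measurable_card_filter (fun j (s : ι → ℝ) => s j < s k)
    fun j => measurableSet_lt (measurable_pi_apply j) (measurable_pi_apply k)
  have heq := measurable_card_filter (fun j (s : ι → ℝ) => s j = s k)
    fun j => measurableSet_eq_fun (measurable_pi_apply j) (measurable_pi_apply k)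
  exact (hlt.comp measurable_fst).add ((heq.comp measurable_fst).mul measurable_snd)

theorem sum_volume_randRank_le (s : ι → ℝ) {T : ℝ} (hT₀ : 0 ≤ T) (hT : T ≤ Fintype.card ι) :
    ∑ k, volume.restrict (Set.Icc 0 1) {u | randRank s k u ≤ T} = ENNReal.ofReal T := by
  classical
  have hterm : ∀ k, volume.restrict (Set.Icc 0 1) {u | randRank s k u ≤ T} =
      ENNReal.ofReal ((min T #{j | s j ≤ s k} - min T #{j | s j < s k}) / #{j | s j = s k}) := by
    intro k
    have hle : (#{j | s j ≤ s k} : ℝ) = #{j | s j < s k} + #{j | s j = s k} := by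
      rw [← Nat.cast_add, ← card_union_of_disjoint (disjoint_filter.mpr fun j _ h => h.ne)]
      simp only [← filter_or, le_iff_lt_or_eq]
    rw [hle]
    exact volume_Icc_inter_setOf_add_mul_le (Nat.cast_pos.mpr (card_pos.mpr ⟨k, by simp⟩)) T
  rw [Fintype.sum_congr _ _ hterm, ← ENNReal.ofReal_sum_of_nonneg, sum_div_card_fiber s
    (fun v => min T #{j | s j ≤ v} - min T #{j | s j < v}),
    sum_image_sub_card_filter_lt s fun n => min T n]
  · simp [hT, hT₀]
  · intro k _
    refine div_nonneg (sub_nonneg.mpr (min_le_min_left _ ?_)) (Nat.cast_nonneg _)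
    exact Nat.cast_le.mpr (card_le_card (monotone_filter_right _ fun _ _ => le_of_lt))

end RandRank

theorem measurePreserving_comp_perm {ι α : Type*} [Fintype ι] [MeasurableSpace α]
    (ν : Measure α) [SigmaFinite ν] (σ : Equiv.Perm ι) :
    MeasurePreserving (fun s : ι → α => s ∘ σ) (Measure.pi fun _ => ν) (Measure.pi fun _ => ν) :=
  measurePreserving_arrowCongr' (fun _ => ν) (fun _ => ν) σ.symm (MeasurableEquiv.refl α)
    fun _ => MeasurePreserving.id ν

theorem card_mul_lintegral_eq_lintegral_sum {ι α : Type*} [Fintype ι] [DecidableEq ι]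
    [MeasurableSpace α] (ν : Measure α) [SigmaFinite ν] (f : (ι → α) → ι → ℝ≥0∞)
    (hf : ∀ k, Measurable fun s => f s k) (hσ : ∀ (σ : Equiv.Perm ι) s k, f (s ∘ σ) k = f s (σ k))
    (k : ι) :
    Fintype.card ι * ∫⁻ s, f s k ∂Measure.pi (fun _ => ν) =
      ∫⁻ s, ∑ j, f s j ∂Measure.pi (fun _ => ν) := by
  have hexch : ∀ j, ∫⁻ s, f s j ∂Measure.pi (fun _ => ν) = ∫⁻ s, f s k ∂Measure.pi (fun _ => ν) :=
    fun j => calc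
      _ = ∫⁻ s, f (s ∘ Equiv.swap k j) k ∂Measure.pi (fun _ => ν) := by
        simp only [hσ, Equiv.swap_apply_left]
      _ = _ := (measurePreserving_comp_perm ν _).lintegral_comp (hf k)
  rw [lintegral_finsetSum _ fun j _ => hf j, sum_congr rfl fun j _ => hexch j, sum_const,
    card_univ, nsmul_eq_mul]

theorem randConformalPval_eq_randRank {Ω : Type*} (n₀ : ℕ) (S : Fin (n₀ + 1) → Ω → ℝ)
    (U : Ω → ℝ) (ω : Ω) :
    randConformalPval n₀ S U ω = randRank (fun i => S i ω) (Fin.last n₀) (U ω) / (n₀ + 1) := by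
  have hcard (p : ℝ → Prop) [DecidablePred p] : #{j | p (S j ω)} =
      {i : Fin n₀ | p (S i.castSucc ω)}.ncard + if p (S (Fin.last n₀) ω) then 1 else 0 := by
    rw [Set.ncard_eq_toFinset_card', Set.toFinset_ofPred, card_filter, card_filter,
      Fin.sum_univ_castSucc]
  rw [randConformalPval, randRank, hcard (· < S (Fin.last n₀) ω), hcard (· = S (Fin.last n₀) ω)]
  simp only [lt_irrefl, if_false, if_true]
  push_cast
  ring

/-- If `S 1, …, S (n₀+1)` are i.i.d. real random variables and `U` is `Uniform[0,1]`,
independent of the scores, then the randomized conformal p-value is exactly uniformly distributed on `[0,1]`: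
`P(p̂ ≤ t) = t` for every `t ∈ [0,1]`. -/
theorem randConformalPval_uniform
    {Ω : Type*} [MeasurableSpace Ω] (μ : Measure Ω) [IsProbabilityMeasure μ]
    (n₀ : ℕ) (S : Fin (n₀ + 1) → Ω → ℝ) (hSmeas : ∀ i, Measurable (S i))
    (ν : Measure ℝ) [IsProbabilityMeasure ν]
    (hSindep : iIndepFun S μ)
    (hSlaw : ∀ i, Measure.map (S i) μ = ν)
    (U : Ω → ℝ) (hUmeas : Measurable U)
    (hUlaw : Measure.map U μ = volume.restrict (Set.Icc (0 : ℝ) 1))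
    (hindep : IndepFun (fun ω => fun i => S i ω) U μ) :
    ∀ t ∈ Set.Icc (0 : ℝ) 1,
      μ {ω | randConformalPval n₀ S U ω ≤ t} = ENNReal.ofReal t := by
  rintro t ⟨ht₀, ht₁⟩
  set T : ℝ := (n₀ + 1) * t
  set A : Fin (n₀ + 1) → Set ((Fin (n₀ + 1) → ℝ) × ℝ) := fun k => {p | randRank p.1 k p.2 ≤ T}
  have hA : ∀ k, MeasurableSet (A k) := fun k =>
    measurableSet_le (measurable_randRank k) measurable_const
  have hX : Measurable fun ω i => S i ω := measurable_pi_lambda _ hSmeas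
  have hlaw : μ.map (fun ω => ((fun i => S i ω), U ω)) =
      (Measure.pi fun _ => ν).prod (volume.restrict (Set.Icc 0 1)) := by
    rw [(indepFun_iff_map_prod_eq_prod_map_map hX.aemeasurable hUmeas.aemeasurable).mp hindep,
      hUlaw, hSindep.map_fun_eq_pi_map fun i => (hSmeas i).aemeasurable]
    simp only [hSlaw]
  have hevent : {ω | randConformalPval n₀ S U ω ≤ t} =
      (fun ω => ((fun i => S i ω), U ω)) ⁻¹' A (Fin.last n₀) := by
    ext ω
    simp only [A, T, Set.mem_preimage, Set.mem_ofPred_eq, randConformalPval_eq_randRank,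
      div_le_iff₀ (by positivity : (0 : ℝ) < n₀ + 1), mul_comm t]
  have hsum := card_mul_lintegral_eq_lintegral_sum ν
    (fun s k => volume.restrict (Set.Icc 0 1) {u | randRank s k u ≤ T})
    (fun k => measurable_measure_prodMk_left (hA k))
    (fun σ s k => by simp only [randRank_comp_perm]) (Fin.last n₀)
  have hT : T ≤ Fintype.card (Fin (n₀ + 1)) := by
    rw [Fintype.card_fin, Nat.cast_succ]
    exact mul_le_of_le_one_right (by positivity) ht₁
  simp only [sum_volume_randRank_le _ (by positivity) hT, lintegral_const, measure_univ,
    mul_one, Fintype.card_fin, T, ENNReal.ofReal_mul (by positivity : (0 : ℝ) ≤ n₀ + 1)] at hsum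
  rw [hevent, ← Measure.map_apply (hX.prodMk hUmeas) (hA _), hlaw, Measure.prod_apply (hA _)]
  refine (ENNReal.mul_right_inj (by simp) (by simp)).mp (hsum.trans ?_)
  norm_cast
end

section
/- Let J be a random variable taking values in {0, 1, …, m} on a probability space, let p_1, …, p_{m_0} be real-valued random variables, and let c ≥ 0. Suppose that for every j ∈ {1,…,m_0} and every k ∈ {1,…,m} with P(J = k) > 0, the conditional super-uniformity bound P(p_j ≤ c·k | J = k) ≤ c·k holds. Then E[ 1{J ≥ 1} · (1/J) · Σ_{j=1}^{m_0} 1{p_j ≤ c·J} ] ≤ m_0 · c. -/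
/-!
Write `A k = {J = k}`. Conditioning on `J = k` turns the super-uniformity bound into
`P(A k ∩ {p_j ≤ c k}) ≤ c k · P(A k)`, so on `A k` the factor `1/J = 1/k` exactly cancels the
`k` in the threshold. Splitting the expectation along the partition `A 0, …, A m` therefore
bounds the contribution of each `p_j` by `c · Σ_k P(A k) = c`.
-/

open MeasureTheory ProbabilityTheory

namespace MeasureTheory

theorem comp_eq_sum_indicator_level_sets {Ω M : Type*} [AddCommMonoid M] {J : Ω → ℕ} {m : ℕ}
    (hJle : ∀ ω, J ω ≤ m) (F : ℕ → Ω → M) (ω : Ω) :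
    F (J ω) ω = ∑ k ∈ Finset.range (m + 1), {x | J x = k}.indicator (F k) ω := by
  classical
  simp only [Set.indicator_apply, Set.mem_ofPred_eq, Finset.sum_ite_eq, Finset.mem_range,
    Nat.lt_succ_of_le (hJle ω), if_true]

variable {Ω E : Type*} [MeasurableSpace Ω] [NormedAddCommGroup E]
  {μ : Measure Ω} {J : Ω → ℕ} {m : ℕ}

theorem integrable_comp_of_forall_le (hJ : Measurable J) (hJle : ∀ ω, J ω ≤ m)
    (F : ℕ → Ω → E) (hF : ∀ k, Integrable (F k) μ) : Integrable (fun ω => F (J ω) ω) μ := by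
  simp_rw [comp_eq_sum_indicator_level_sets hJle F]
  exact integrable_finsetSum _ fun k _ => (hF k).indicator (hJ (measurableSet_singleton k))

theorem integral_comp_eq_sum_setIntegral [NormedSpace ℝ E] (hJ : Measurable J)
    (hJle : ∀ ω, J ω ≤ m) (F : ℕ → Ω → E) (hF : ∀ k, Integrable (F k) μ) :
    ∫ ω, F (J ω) ω ∂μ = ∑ k ∈ Finset.range (m + 1), ∫ ω in {x | J x = k}, F k ω ∂μ := by
  have hA : ∀ k, MeasurableSet {x | J x = k} := fun k => hJ (measurableSet_singleton k)
  simp_rw [comp_eq_sum_indicator_level_sets hJle F]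
  rw [integral_finsetSum _ fun k _ => (hF k).indicator (hA k)]
  exact Finset.sum_congr rfl fun k _ => integral_indicator (hA k)

end MeasureTheory

namespace ProbabilityTheory

variable {Ω : Type*} [MeasurableSpace Ω] {μ : Measure Ω}

theorem measureReal_inter_le_of_cond_le [IsFiniteMeasure μ] {s t : Set Ω} (hs : MeasurableSet s)
    {r : ℝ} (hr : 0 ≤ r) (hst : μ s ≠ 0 → μ[t | s] ≤ ENNReal.ofReal r) :
    μ.real (s ∩ t) ≤ r * μ.real s := by
  by_cases hs0 : μ s = 0
  · rw [measureReal_def, measure_mono_null Set.inter_subset_left hs0]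
    simp only [ENNReal.toReal_zero]
    exact mul_nonneg hr measureReal_nonneg
  · have h : μ (s ∩ t) ≤ ENNReal.ofReal r * μ s := by
      rw [← cond_mul_eq_inter hs]
      exact mul_le_mul_left (hst hs0) _
    calc μ.real (s ∩ t) ≤ (ENNReal.ofReal r * μ s).toReal :=
          ENNReal.toReal_mono (ENNReal.mul_ne_top ENNReal.ofReal_ne_top (measure_ne_top μ s)) h
      _ = r * μ.real s := by rw [ENNReal.toReal_mul, ENNReal.toReal_ofReal hr, measureReal_def]

theorem integral_ite_inv_le_of_cond_le [IsProbabilityMeasure μ] {m : ℕ} {J : Ω → ℕ}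
    (hJ : Measurable J) (hJle : ∀ ω, J ω ≤ m) {q : Ω → ℝ} (hq : Measurable q) {c : ℝ}
    (hc : 0 ≤ c)
    (hcond : ∀ k ∈ Finset.Icc 1 m, μ {ω | J ω = k} ≠ 0 →
      μ[{ω | q ω ≤ c * (k : ℝ)} | {ω | J ω = k}] ≤ ENNReal.ofReal (c * (k : ℝ))) :
    ∫ ω, (if q ω ≤ c * (J ω : ℝ) then (J ω : ℝ)⁻¹ else 0) ∂μ ≤ c := by
  set F : ℕ → Ω → ℝ := fun k => {ω | q ω ≤ c * (k : ℝ)}.indicator fun _ => (k : ℝ)⁻¹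
  have hB : ∀ k : ℕ, MeasurableSet {ω | q ω ≤ c * (k : ℝ)} :=
    fun k => measurableSet_le hq measurable_const
  have hA : ∀ k, MeasurableSet {ω | J ω = k} := fun k => hJ (measurableSet_singleton k)
  have hF : ∀ k, Integrable (F k) μ := fun k => (integrable_const _).indicator (hB k)
  have hpiece : ∀ k ∈ Finset.range (m + 1),
      ∫ ω in {x | J x = k}, F k ω ∂μ ≤ c * μ.real {x | J x = k} := by
    intro k hk
    rw [setIntegral_indicator (hB k), setIntegral_const, smul_eq_mul]
    rcases Nat.eq_zero_or_pos k with rfl | hk1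
    · simpa using mul_nonneg hc measureReal_nonneg
    have hkpos : (0 : ℝ) < k := Nat.cast_pos.mpr hk1
    have hkm : k ∈ Finset.Icc 1 m :=
      Finset.mem_Icc.mpr ⟨hk1, Nat.lt_succ_iff.mp (Finset.mem_range.mp hk)⟩
    have h := measureReal_inter_le_of_cond_le (hA k) (by positivity) (hcond k hkm)
    calc μ.real ({x | J x = k} ∩ {ω | q ω ≤ c * k}) * (k : ℝ)⁻¹
        ≤ c * k * μ.real {x | J x = k} * (k : ℝ)⁻¹ := by gcongr
      _ = c * μ.real {x | J x = k} := by field_simp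
  have hsum : ∑ k ∈ Finset.range (m + 1), μ.real {x | J x = k} = 1 := by
    change ∑ k ∈ Finset.range (m + 1), μ.real (J ⁻¹' {k}) = 1
    rw [sum_measureReal_preimage_singleton _ fun k _ => hA k]
    convert probReal_univ (μ := μ)
    exact Set.eq_univ_of_forall fun ω => Finset.mem_range.mpr (Nat.lt_succ_of_le (hJle ω))
  calc ∫ ω, (if q ω ≤ c * (J ω : ℝ) then (J ω : ℝ)⁻¹ else 0) ∂μ
      = ∑ k ∈ Finset.range (m + 1), ∫ ω in {x | J x = k}, F k ω ∂μ :=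
        integral_comp_eq_sum_setIntegral hJ hJle F hF
    _ ≤ ∑ k ∈ Finset.range (m + 1), c * μ.real {x | J x = k} := Finset.sum_le_sum hpiece
    _ = c := by rw [← Finset.mul_sum, hsum, mul_one]

end ProbabilityTheory

/-- Let `J` be a random variable with values in `{0,…,m}`, let `p 1, …, p m₀` be real
random variables and `c ≥ 0`. If for every `j` and every `k ∈ {1,…,m}` with
`P(J = k) > 0` the conditional super-uniformity bound `P(p_j ≤ c·k | J = k) ≤ c·k`
holds, then `E[1{J ≥ 1} · (1/J) · Σ_j 1{p_j ≤ c·J}] ≤ m₀ · c`. -/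
theorem expected_ratio_le_of_conditional_superuniform
    {Ω : Type*} [MeasurableSpace Ω] (μ : Measure Ω) [IsProbabilityMeasure μ]
    (m m₀ : ℕ) (J : Ω → ℕ) (hJmeas : Measurable J) (hJle : ∀ ω, J ω ≤ m)
    (p : Fin m₀ → Ω → ℝ) (hpmeas : ∀ j, Measurable (p j))
    (c : ℝ) (hc : 0 ≤ c)
    (hcond : ∀ (j : Fin m₀), ∀ k ∈ Finset.Icc 1 m, μ {ω | J ω = k} ≠ 0 →
      μ[{ω | p j ω ≤ c * (k : ℝ)} | {ω | J ω = k}] ≤ ENNReal.ofReal (c * (k : ℝ))) :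
    (∫ ω, (if 1 ≤ J ω then
        (1 / (J ω : ℝ)) * ∑ j : Fin m₀, (if p j ω ≤ c * (J ω : ℝ) then (1 : ℝ) else 0)
      else 0) ∂μ) ≤ (m₀ : ℝ) * c := by
  -- `(0 : ℝ)⁻¹ = 0`, so the guard `1 ≤ J ω` can be dropped.
  have hsplit : ∀ ω, (if 1 ≤ J ω then
        (1 / (J ω : ℝ)) * ∑ j : Fin m₀, (if p j ω ≤ c * (J ω : ℝ) then (1 : ℝ) else 0)
      else 0) = ∑ j : Fin m₀, (if p j ω ≤ c * (J ω : ℝ) then (J ω : ℝ)⁻¹ else 0) := by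
    intro ω
    rcases Nat.eq_zero_or_pos (J ω) with h0 | hpos
    · simp [h0]
    · simp only [if_pos (Nat.one_le_iff_ne_zero.mpr hpos.ne'), one_div, Finset.mul_sum, mul_ite,
        mul_one, mul_zero]
  have hint : ∀ j, Integrable
      (fun ω => if p j ω ≤ c * (J ω : ℝ) then (J ω : ℝ)⁻¹ else 0) μ := fun j =>
    integrable_comp_of_forall_le hJmeas hJle
      (fun k => {ω | p j ω ≤ c * (k : ℝ)}.indicator fun _ => (k : ℝ)⁻¹)
      fun k => (integrable_const _).indicator (measurableSet_le (hpmeas j) measurable_const)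
  simp_rw [hsplit]
  rw [integral_finsetSum _ fun j _ => hint j]
  calc ∑ j : Fin m₀, ∫ ω, (if p j ω ≤ c * (J ω : ℝ) then (J ω : ℝ)⁻¹ else 0) ∂μ
      ≤ ∑ _j : Fin m₀, c := Finset.sum_le_sum fun j _ =>
        integral_ite_inv_le_of_cond_le hJmeas hJle (hpmeas j) hc (hcond j)
    _ = (m₀ : ℝ) * c := by simp
end
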